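/- The map sending a family (x_i)_{i∈ι} to the family (V_i x_i)_{i∈ι} restricts to a bijection from the set of solutions of the original system onto the set of solutions of the compressed system; its inverse sends a compressed solution (y_i)_{i∈ι} to the family x_i := A_i^{-1} f_i − A_i^{-1} U_i f̃_i + A_i^{-1} U_i Ã_i y_i. In particular, the original system has a unique solution if and only if the compressed system has a unique solution. -/

import Mathlib

/-!
Write `s(y)ᵢ = ∑_{j ≠ i} Rᵢⱼ yⱼ` for the coupling and `g(y)ᵢ = Aᵢ⁻¹ (fᵢ - Uᵢ s(y)ᵢ)` for
the local solves. Since the coupling term of the original system is `Uᵢ s(V x)ᵢ`, the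
original system says `x = g (V x)`, and after multiplying by `Ãᵢ⁻¹ = Vᵢ Aᵢ⁻¹ Uᵢ` the
compressed system says `y = V (g y)`. The fixed points of `g ∘ V` and of `V ∘ g` correspond
to each other through `V` and `g`, and on compressed solutions `g` agrees with the stated
downward formula.
-/

open Matrix Set Function

namespace Matrix

variable {K m p : Type*} [CommRing K]

theorem mulVec_add_eq_iff_eq_inv_mulVec_sub [Fintype m] [DecidableEq m] {M : Matrix m m K}
    (hM : IsUnit M) {x w c : m → K} :
    M *ᵥ x + w = c ↔ x = M⁻¹ *ᵥ (c - w) := by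
  have hdet := (isUnit_iff_isUnit_det M).mp hM
  rw [← eq_sub_iff_add_eq]
  constructor
  · intro h
    rw [← h, mulVec_mulVec, nonsing_inv_mul M hdet, one_mulVec]
  · rintro rfl
    rw [mulVec_mulVec, mul_nonsing_inv M hdet, one_mulVec]

theorem inv_mulVec_add_eq_inv_mulVec_iff [Fintype p] [DecidableEq p] {M : Matrix p p K}
    (hM : IsUnit M) {y s c : p → K} :
    M⁻¹ *ᵥ y + s = M⁻¹ *ᵥ c ↔ y = c - M *ᵥ s := by
  have hdet := (isUnit_iff_isUnit_det M).mp hM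
  rw [mulVec_add_eq_iff_eq_inv_mulVec_sub (isUnit_nonsing_inv_iff.mpr hM),
    nonsing_inv_nonsing_inv M hdet, mulVec_sub, mulVec_mulVec, mul_nonsing_inv M hdet, one_mulVec]

theorem mulVec_sub_mulVec_add_mulVec_eq_of_add_eq [Fintype m] [Fintype p] {P : Matrix m m K}
    {U : Matrix m p K} {N : Matrix p p K} {f : m → K} {y s c : p → K} (h : N *ᵥ y + s = c) :
    P *ᵥ f - (P * U) *ᵥ c + (P * U * N) *ᵥ y = P *ᵥ (f - U *ᵥ s) := by
  rw [← h]
  simp only [mulVec_sub, mulVec_add, ← mulVec_mulVec]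
  abel

theorem sum_mul_mul_mulVec {ι n q : Type*} [Fintype p] [Fintype n] [Fintype q] (t : Finset ι)
    (U : Matrix m p K) (R : ι → Matrix p q K) (V : ι → Matrix q n K) (x : ι → n → K) :
    ∑ j ∈ t, (U * R j * V j) *ᵥ x j = U *ᵥ ∑ j ∈ t, R j *ᵥ (V j *ᵥ x j) := by
  simp only [mulVec_sum, mulVec_mulVec, Matrix.mul_assoc]

end Matrix

theorem upward_downward_bijection_general {ι : Type*} [Fintype ι] [DecidableEq ι] {n k : ℕ}
    (A : ι → Matrix (Fin n) (Fin n) ℂ)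
    (U : ι → Matrix (Fin n) (Fin k) ℂ)
    (V : ι → Matrix (Fin k) (Fin n) ℂ)
    (R : ι → ι → Matrix (Fin k) (Fin k) ℂ)
    (f : ι → Fin n → ℂ)
    (hA : ∀ i, IsUnit (A i))
    (hVAU : ∀ i, IsUnit (V i * (A i)⁻¹ * U i)) :
    let Φ : (ι → Fin n → ℂ) → (ι → Fin k → ℂ) := fun x i => V i *ᵥ x i
    let Ψ : (ι → Fin k → ℂ) → (ι → Fin n → ℂ) := fun y i =>
      (A i)⁻¹ *ᵥ f i
        - ((A i)⁻¹ * U i) *ᵥ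
            ((V i * (A i)⁻¹ * U i)⁻¹ *ᵥ ((V i * (A i)⁻¹) *ᵥ f i))
        + ((A i)⁻¹ * U i * (V i * (A i)⁻¹ * U i)⁻¹) *ᵥ y i
    let origSol : Set (ι → Fin n → ℂ) :=
      {x | ∀ i, A i *ᵥ x i
          + ∑ j ∈ Finset.univ.erase i, (U i * R i j * V j) *ᵥ x j = f i}
    let compSol : Set (ι → Fin k → ℂ) :=
      {y | ∀ i, (V i * (A i)⁻¹ * U i)⁻¹ *ᵥ y i
          + ∑ j ∈ Finset.univ.erase i, R i j *ᵥ y j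
        = (V i * (A i)⁻¹ * U i)⁻¹ *ᵥ ((V i * (A i)⁻¹) *ᵥ f i)}
    Set.BijOn Φ origSol compSol ∧ Set.InvOn Ψ Φ origSol compSol ∧
      ((∃! x, x ∈ origSol) ↔ (∃! y, y ∈ compSol)) := by
  intro Φ Ψ origSol compSol
  let s : (ι → Fin k → ℂ) → ι → Fin k → ℂ := fun y i =>
    ∑ j ∈ Finset.univ.erase i, R i j *ᵥ y j
  let g : (ι → Fin k → ℂ) → ι → Fin n → ℂ := fun y i => (A i)⁻¹ *ᵥ (f i - U i *ᵥ s y i)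
  have horig : origSol = fixedPoints (g ∘ Φ) := by
    ext x
    rw [mem_fixedPoints, IsFixedPt, funext_iff]
    refine forall_congr' fun i => ?_
    rw [sum_mul_mul_mulVec, mulVec_add_eq_iff_eq_inv_mulVec_sub (hA i), eq_comm]
    rfl
  have hcomp : compSol = fixedPoints (Φ ∘ g) := by
    ext y
    rw [mem_fixedPoints, IsFixedPt, funext_iff]
    refine forall_congr' fun i => ?_
    rw [inv_mulVec_add_eq_inv_mulVec_iff (hVAU i), eq_comm]
    show _ ↔ V i *ᵥ ((A i)⁻¹ *ᵥ (f i - U i *ᵥ s y i)) = y i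
    rw [mulVec_sub, mulVec_sub, mulVec_mulVec, mulVec_mulVec, mulVec_mulVec, Matrix.mul_assoc]
  have hΨg : EqOn Ψ g compSol := fun y hy =>
    funext fun i => mulVec_sub_mulVec_add_mulVec_eq_of_add_eq (hy i)
  have hbij : BijOn Φ origSol compSol := horig ▸ hcomp ▸ bijOn_fixedPoints_comp g Φ
  have hinv : InvOn g Φ origSol compSol := horig ▸ hcomp ▸ invOn_fixedPoints_comp g Φ
  refine ⟨hbij, ⟨hinv.1.congr_left hbij.mapsTo hΨg.symm, hinv.2.congr_left hΨg.symm⟩, ?_⟩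
  exact Equiv.existsUnique_subtype_congr (hbij.equiv Φ)

/-- Combining the upward and downward steps of the Martinsson–Rokhlin-type fast direct
solver: `x ↦ (V i *ᵥ x i)` is a bijection from the set of solutions of the original
system onto the set of solutions of the compressed system, with inverse
`y ↦ ((A i)⁻¹ *ᵥ f i - (A i)⁻¹ * U i *ᵥ f̃ i + (A i)⁻¹ * U i * Ã i *ᵥ y i)`.
In particular the original system has a unique solution iff the compressed one does. -/
theorem upward_downward_bijection {ι : Type*} [Fintype ι] [DecidableEq ι] {n k : ℕ}
    (hn : 0 < n) (hk : 0 < k)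
    (A : ι → Matrix (Fin n) (Fin n) ℂ)
    (U : ι → Matrix (Fin n) (Fin k) ℂ)
    (V : ι → Matrix (Fin k) (Fin n) ℂ)
    (R : ι → ι → Matrix (Fin k) (Fin k) ℂ)
    (f : ι → Fin n → ℂ)
    (hA : ∀ i, IsUnit (A i))
    (hVAU : ∀ i, IsUnit (V i * (A i)⁻¹ * U i)) :
    let Φ : (ι → Fin n → ℂ) → (ι → Fin k → ℂ) := fun x i => V i *ᵥ x i
    let Ψ : (ι → Fin k → ℂ) → (ι → Fin n → ℂ) := fun y i =>
      (A i)⁻¹ *ᵥ f i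
        - ((A i)⁻¹ * U i) *ᵥ
            ((V i * (A i)⁻¹ * U i)⁻¹ *ᵥ ((V i * (A i)⁻¹) *ᵥ f i))
        + ((A i)⁻¹ * U i * (V i * (A i)⁻¹ * U i)⁻¹) *ᵥ y i
    let origSol : Set (ι → Fin n → ℂ) :=
      {x | ∀ i, A i *ᵥ x i
          + ∑ j ∈ Finset.univ.erase i, (U i * R i j * V j) *ᵥ x j = f i}
    let compSol : Set (ι → Fin k → ℂ) :=
      {y | ∀ i, (V i * (A i)⁻¹ * U i)⁻¹ *ᵥ y i
          + ∑ j ∈ Finset.univ.erase i, R i j *ᵥ y j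
        = (V i * (A i)⁻¹ * U i)⁻¹ *ᵥ ((V i * (A i)⁻¹) *ᵥ f i)}
    Set.BijOn Φ origSol compSol ∧ Set.InvOn Ψ Φ origSol compSol ∧
      ((∃! x, x ∈ origSol) ↔ (∃! y, y ∈ compSol)) :=
  upward_downward_bijection_general A U V R f hA hVAU
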